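/- (Logarithmic regret for strongly convex losses.) In the setting of the online proximal algorithm with θ₁ = 0 ∈ Θ, composite regularizer R = R₁ + ⋯ + R_J satisfying the shrinkage conditions, R ≥ 0 and R(0) = 0, assume each loss L_t is convex, G-Lipschitz on Θ, and σ-strongly convex (σ > 0), and use learning rates η_t = 1/(σt). Then the regret satisfies Reg_T ≤ G²(1 + log T)/(2σ). -/

import Mathlib

open RealInnerProductSpace

noncomputable section

/-- Extended-real-valued convexity of `φ : E → ℝ ∪ {+∞}`. -/
def ERealConvexOn {E : Type*} [NormedAddCommGroup E] [InnerProductSpace ℝ E]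
    (φ : E → EReal) : Prop :=
  ∀ x y : E, ∀ t : ℝ, 0 ≤ t → t ≤ 1 →
    φ (t • x + (1 - t) • y) ≤ (t : EReal) * φ x + ((1 - t : ℝ) : EReal) * φ y

/-- `φ` is proper: it never takes the value `−∞` (functions into `ℝ ∪ {+∞}`
never do) and is finite somewhere. -/
def ERealProper {E : Type*} (φ : E → EReal) : Prop :=
  (∃ x, φ x ≠ ⊤) ∧ ∀ x, φ x ≠ ⊥

/-- `x` is the proximity point `prox_φ(y)`, i.e. a minimizer of
`z ↦ (1/2)‖z − y‖² + φ(z)`. -/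
def IsProxPt {E : Type*} [NormedAddCommGroup E] (φ : E → EReal) (y x : E) : Prop :=
  ∀ z : E, (((1/2) * ‖x - y‖^2 : ℝ) : EReal) + φ x ≤ (((1/2) * ‖z - y‖^2 : ℝ) : EReal) + φ z

/-- The Moreau envelope `M_φ(y) = inf_x (1/2)‖x − y‖² + φ(x)`. -/
def moreauEnvelope {E : Type*} [NormedAddCommGroup E] (φ : E → EReal) (y : E) : EReal :=
  ⨅ x : E, (((1/2) * ‖x - y‖^2 : ℝ) : EReal) + φ x

/-- The Fenchel conjugate `φ⋆(y) = sup_x ⟨y, x⟩ − φ(x)`. -/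
def fenchelConjugate {E : Type*} [NormedAddCommGroup E] [InnerProductSpace ℝ E]
    (φ : E → EReal) (y : E) : EReal :=
  ⨆ x : E, ((⟪y, x⟫ : ℝ) : EReal) - φ x

/-- `g` is a subgradient of the convex function `L` at `θ₀`. -/
def IsSubgradientAt {E : Type*} [NormedAddCommGroup E] [InnerProductSpace ℝ E]
    (L : E → ℝ) (g θ₀ : E) : Prop :=
  ∀ θ : E, (⟪g, θ - θ₀⟫ : ℝ) ≤ L θ - L θ₀

/-- `x = prox_{c·φ}(y)`: `x` minimizes `z ↦ (1/2)‖z − y‖² + c·φ(z)`. -/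
def IsProxPtOf {E : Type*} [NormedAddCommGroup E] (c : ℝ) (φ : E → EReal) (y x : E) : Prop :=
  ∀ z : E, (((1/2) * ‖x - y‖^2 : ℝ) : EReal) + (c : EReal) * φ x
    ≤ (((1/2) * ‖z - y‖^2 : ℝ) : EReal) + (c : EReal) * φ z

/-- `x = Π_Θ(y)`: `x` is the Euclidean projection of `y` onto `Θ`. -/
def IsProjPt {E : Type*} [NormedAddCommGroup E] (Θ : Set E) (y x : E) : Prop :=
  x ∈ Θ ∧ ∀ z ∈ Θ, ‖x - y‖ ≤ ‖z - y‖

/-!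
Each prox step satisfies the three-point inequality
`c R_j(ξ_{j+1}) + ½‖θ' - ξ_{j+1}‖² ≤ c R_j(θ') + ½‖θ' - ξ_j‖²`; summed over `j` the distances
telescope, the shrinkage conditions move every `R_j` to the end of the sweep, and the projection
onto `Θ` does not increase the distance to `θ' ∈ Θ`. Together with the gradient step and
`σ`-strong convexity, round `t` yields, for the potential `Φ_t = λR(θ_t) + σ(t-1)/2 ‖θ_t - θ'‖²`,
`λR(θ_t) + L_t(θ_t) + Φ_{t+1} ≤ λR(θ') + L_t(θ') + G²/(2σt) + Φ_t`.
Summing over `t`, with `Φ_1 = 0 ≤ Φ_{T+1}` and `∑ 1/t ≤ 1 + log T`, gives the bound.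
The argument stays in `EReal` and only adds inequalities, so infinite values of `R` need no
separate treatment.
-/

open Finset Filter Topology

namespace EReal

lemma coe_finset_sum {ι : Type*} (s : Finset ι) (f : ι → ℝ) :
    ((∑ i ∈ s, f i : ℝ) : EReal) = ∑ i ∈ s, (f i : EReal) :=
  map_sum (⟨⟨Real.toEReal, coe_zero⟩, coe_add⟩ : ℝ →+ EReal) f s

lemma coe_mul_finset_sum {c : ℝ} (hc : 0 ≤ c) {ι : Type*} (s : Finset ι) (f : ι → EReal) :
    (c : EReal) * ∑ i ∈ s, f i = ∑ i ∈ s, (c : EReal) * f i :=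
  map_sum (⟨⟨((c : EReal) * ·), mul_zero _⟩,
    left_distrib_of_nonneg_of_ne_top (EReal.coe_nonneg.2 hc) (coe_ne_top c)⟩ : EReal →+ EReal) f s

lemma add_div_le_add_div_of_coe_mul_add_le {η : ℝ} (hη : 0 < η) {a b : EReal} {r s : ℝ}
    (h : (η : EReal) * a + r ≤ η * b + s) :
    a + ((r / η : ℝ) : EReal) ≤ b + ((s / η : ℝ) : EReal) := by
  have hinv : (0 : EReal) ≤ ((η⁻¹ : ℝ) : EReal) := EReal.coe_nonneg.2 (inv_nonneg.2 hη.le)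
  have hunscale (x : EReal) (u : ℝ) :
      ((η⁻¹ : ℝ) : EReal) * (η * x + u) = x + ((u / η : ℝ) : EReal) := by
    rw [left_distrib_of_nonneg_of_ne_top hinv (coe_ne_top _), ← mul_assoc, ← coe_mul, ← coe_mul,
      inv_mul_cancel₀ hη.ne', coe_one, one_mul, div_eq_inv_mul]
  rw [← hunscale, ← hunscale]
  exact mul_le_mul_of_nonneg_left h hinv

end EReal

section Telescoping

variable {M : Type*} [AddCommMonoid M] [PartialOrder M] [IsOrderedAddMonoid M]

theorem Fin.sum_add_potential_le {n : ℕ} (x y : Fin n → M) (Φ : Fin (n + 1) → M)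
    (h : ∀ i, x i + Φ i.succ ≤ y i + Φ i.castSucc) :
    ∑ i, x i + Φ (Fin.last n) ≤ ∑ i, y i + Φ 0 := by
  induction n with
  | zero => simp [Fin.last]
  | succ n ih =>
    have hinit := ih (fun i => x i.castSucc) (fun i => y i.castSucc) (fun i => Φ i.castSucc)
      fun i => h i.castSucc
    rw [Fin.sum_univ_castSucc, Fin.sum_univ_castSucc, ← Fin.succ_last, ← Fin.castSucc_zero]
    calc ∑ i : Fin n, x i.castSucc + x (Fin.last n) + Φ (Fin.last n).succ
        ≤ ∑ i : Fin n, x i.castSucc + (y (Fin.last n) + Φ (Fin.last n).castSucc) := by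
          rw [add_assoc]; exact add_le_add le_rfl (h _)
      _ = ∑ i : Fin n, x i.castSucc + Φ (Fin.last n).castSucc + y (Fin.last n) := by abel
      _ ≤ ∑ i : Fin n, y i.castSucc + Φ (Fin.castSucc 0) + y (Fin.last n) :=
          add_le_add hinit le_rfl
      _ = ∑ i : Fin n, y i.castSucc + y (Fin.last n) + Φ (Fin.castSucc 0) := by abel

theorem sum_Icc_add_potential_le (x y Φ : ℕ → M) {T : ℕ}
    (h : ∀ t ∈ Icc 1 T, x t + Φ (t + 1) ≤ y t + Φ t) :
    ∑ t ∈ Icc 1 T, x t + Φ (T + 1) ≤ ∑ t ∈ Icc 1 T, y t + Φ 1 := by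
  induction T with
  | zero => simp
  | succ T ih =>
    have hinit := ih fun t ht => h t (Icc_subset_Icc_right T.le_succ ht)
    rw [sum_Icc_succ_top (by omega), sum_Icc_succ_top (by omega)]
    calc ∑ t ∈ Icc 1 T, x t + x (T + 1) + Φ (T + 1 + 1)
        ≤ ∑ t ∈ Icc 1 T, x t + (y (T + 1) + Φ (T + 1)) := by
          rw [add_assoc]; exact add_le_add le_rfl (h _ (right_mem_Icc.2 (by omega)))
      _ = ∑ t ∈ Icc 1 T, x t + Φ (T + 1) + y (T + 1) := by abel
      _ ≤ ∑ t ∈ Icc 1 T, y t + Φ 1 + y (T + 1) := add_le_add hinit le_rfl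
      _ = ∑ t ∈ Icc 1 T, y t + y (T + 1) + Φ 1 := by abel

end Telescoping

theorem Fin.apply_le_apply_succ_of_succ_le_castSucc {α : Type*} [Preorder α] {n : ℕ}
    (f : Fin (n + 1) → α) (j : Fin n) (h : ∀ k : Fin n, j < k → f k.succ ≤ f k.castSucc) :
    ∀ i, j.succ ≤ i → f i ≤ f j.succ := by
  intro i
  induction i using Fin.induction with
  | zero => exact fun hi => absurd hi (not_le.2 (Fin.succ_pos j))
  | succ k ih =>
    intro hi
    rcases (Fin.succ_le_succ_iff.1 hi).eq_or_lt with rfl | hjk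
    · exact le_rfl
    · exact (h k hjk).trans (ih (Fin.succ_le_castSucc_iff.2 hjk))

lemma nonneg_of_forall_add_mul_nonneg {a b : ℝ} (h : ∀ t ∈ Set.Ioc (0 : ℝ) 1, 0 ≤ a + t * b) :
    0 ≤ a := by
  have hlim : Tendsto (fun t : ℝ => a + t * b) (𝓝[>] 0) (𝓝 a) := by
    have hcont : Continuous fun t : ℝ => a + t * b := by fun_prop
    simpa using (hcont.tendsto 0).mono_left nhdsWithin_le_nhds
  exact ge_of_tendsto hlim (eventually_of_mem (Ioc_mem_nhdsGT one_pos) h)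

variable {E : Type*} [NormedAddCommGroup E] [InnerProductSpace ℝ E]

lemma add_norm_sq_le_of_forall_segment {x y z : E} {p q : ℝ}
    (h : ∀ t ∈ Set.Ioc (0 : ℝ) 1,
      1 / 2 * ‖x - y‖ ^ 2 + p ≤ 1 / 2 * ‖t • z + (1 - t) • x - y‖ ^ 2 + (t * q + (1 - t) * p)) :
    p + 1 / 2 * ‖z - x‖ ^ 2 ≤ q + 1 / 2 * ‖z - y‖ ^ 2 := by
  have hexpand (t : ℝ) : ‖t • z + (1 - t) • x - y‖ ^ 2
      = ‖x - y‖ ^ 2 + 2 * t * ⟪x - y, z - x⟫ + t ^ 2 * ‖z - x‖ ^ 2 := by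
    rw [show t • z + (1 - t) • x - y = (x - y) + t • (z - x) by module, norm_add_sq_real,
      inner_smul_right, norm_smul, mul_pow, Real.norm_eq_abs, sq_abs]
    ring
  -- the first-order optimality condition at `x` in the direction `z - x`
  have hfirst : 0 ≤ ⟪x - y, z - x⟫ + q - p := by
    refine nonneg_of_forall_add_mul_nonneg (b := ‖z - x‖ ^ 2 / 2) fun t ht => ?_
    have ht' := h t ht
    rw [hexpand] at ht'
    refine nonneg_of_mul_nonneg_right (a := t) ?_ ht.1
    linarith
  have hz := hexpand 1
  simp only [one_smul, sub_self, zero_smul, add_zero, mul_one, one_pow, one_mul] at hz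
  nlinarith [sq_nonneg ‖x - y‖]

theorem IsProxPtOf.add_norm_sq_le {φ : E → EReal} (hconv : ERealConvexOn φ)
    (hbot : ∀ z, φ z ≠ ⊥) {c : ℝ} (hc : 0 ≤ c) {y x : E} (hx : IsProxPtOf c φ y x) (z : E) :
    (c : EReal) * φ x + ((1 / 2 * ‖z - x‖ ^ 2 : ℝ) : EReal)
      ≤ c * φ z + ((1 / 2 * ‖z - y‖ ^ 2 : ℝ) : EReal) := by
  rcases hc.eq_or_lt with rfl | hc
  · have hxy : x = y := by
      have hy := hx y
      simp only [EReal.coe_zero, zero_mul, add_zero, sub_self, norm_zero] at hy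
      norm_cast at hy
      exact sub_eq_zero.1 (norm_eq_zero.1 (by nlinarith [norm_nonneg (x - y)]))
    simp [hxy]
  by_cases hz : φ z = ⊤
  · rw [hz, EReal.coe_mul_top_of_pos hc, EReal.top_add_of_ne_bot (EReal.coe_ne_bot _)]
    exact le_top
  obtain ⟨b, hb⟩ : ∃ b : ℝ, φ z = b := ⟨_, (EReal.coe_toReal hz (hbot z)).symm⟩
  have hxz := hx z
  obtain ⟨a, ha⟩ : ∃ a : ℝ, φ x = a := by
    refine ⟨_, (EReal.coe_toReal (fun hxt => ?_) (hbot x)).symm⟩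
    rw [hxt, hb, EReal.coe_mul_top_of_pos hc, EReal.add_top_of_ne_bot (EReal.coe_ne_bot _),
      top_le_iff] at hxz
    exact EReal.coe_ne_top _ (by exact_mod_cast hxz)
  rw [ha, hb]
  norm_cast
  refine add_norm_sq_le_of_forall_segment fun t ht => ?_
  have hseg : (c : EReal) * φ (t • z + (1 - t) • x)
      ≤ ((c * (t * b + (1 - t) * a) : ℝ) : EReal) := by
    have := mul_le_mul_of_nonneg_left (hconv z x t ht.1.le ht.2) (EReal.coe_nonneg.2 hc.le)
    rw [ha, hb] at this
    exact_mod_cast this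
  have hprox := (hx (t • z + (1 - t) • x)).trans (add_le_add le_rfl hseg)
  rw [ha] at hprox
  norm_cast at hprox
  linarith

theorem IsProjPt.norm_sub_le {Θ : Set E} (hΘ : Convex ℝ Θ) {y x : E} (hx : IsProjPt Θ y x)
    {w : E} (hw : w ∈ Θ) : ‖x - w‖ ≤ ‖y - w‖ := by
  have : Nonempty Θ := ⟨⟨x, hx.1⟩⟩
  have hmin : ‖y - x‖ = ⨅ v : Θ, ‖y - v‖ :=
    le_antisymm (le_ciInf fun v => by rw [norm_sub_rev y x, norm_sub_rev y v]; exact hx.2 v v.2)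
      (ciInf_le ⟨0, fun _ ⟨_, h⟩ => h ▸ norm_nonneg _⟩ (⟨x, hx.1⟩ : Θ))
  have hobtuse := (norm_eq_iInf_iff_real_inner_le_zero hΘ hx.1).1 hmin w hw
  have hexpand : ‖y - w‖ ^ 2 = ‖y - x‖ ^ 2 - 2 * ⟪y - x, w - x⟫ + ‖x - w‖ ^ 2 := by
    rw [← norm_sub_rev w x, ← norm_sub_sq_real, sub_sub_sub_cancel_right]
  rw [← pow_le_pow_iff_left₀ (norm_nonneg _) (norm_nonneg _) two_ne_zero]
  nlinarith [sq_nonneg ‖y - x‖]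

theorem prox_sweep_bound {J : ℕ} {Θ : Set E} (hΘ : Convex ℝ Θ) (R : Fin J → E → EReal)
    (hRconv : ∀ j, ERealConvexOn (R j)) (hRbot : ∀ j z, R j z ≠ ⊥) {lam η : ℝ}
    (hlam : 0 ≤ lam) (hη : 0 < η) (ξ : Fin (J + 1) → E) (w : E)
    (hsteps : ∀ j, IsProxPtOf (η * lam) (R j) (ξ j.castSucc) (ξ j.succ))
    (hshrink : ∀ j j' : Fin J, j' < j → R j' (ξ j.succ) ≤ R j' (ξ j.castSucc))
    (hproj : IsProjPt Θ (ξ (Fin.last J)) w)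
    (hRproj : ∑ j, R j w ≤ ∑ j, R j (ξ (Fin.last J))) {θ' : E} (hθ' : θ' ∈ Θ) :
    (lam : EReal) * ∑ j, R j w + ((‖w - θ'‖ ^ 2 / (2 * η) : ℝ) : EReal)
      ≤ lam * ∑ j, R j θ' + ((‖θ' - ξ 0‖ ^ 2 / (2 * η) : ℝ) : EReal) := by
  have hc : 0 ≤ η * lam := mul_nonneg hη.le hlam
  have htelescope := Fin.sum_add_potential_le _ _
    (fun i => ((1 / 2 * ‖θ' - ξ i‖ ^ 2 : ℝ) : EReal))
    fun j => (hsteps j).add_norm_sq_le (hRconv j) (hRbot j) hc θ'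
  have hlast (j : Fin J) : R j (ξ (Fin.last J)) ≤ R j (ξ j.succ) :=
    Fin.apply_le_apply_succ_of_succ_le_castSucc (fun i => R j (ξ i)) j
      (fun k hk => hshrink k j hk) _ (Fin.le_last _)
  have hdist : ‖w - θ'‖ ^ 2 ≤ ‖θ' - ξ (Fin.last J)‖ ^ 2 := by
    rw [norm_sub_rev θ']
    exact pow_le_pow_left₀ (norm_nonneg _) (hproj.norm_sub_le hΘ hθ') 2
  have hscaled : (η : EReal) * (lam * ∑ j, R j w) + ((1 / 2 * ‖w - θ'‖ ^ 2 : ℝ) : EReal)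
      ≤ η * (lam * ∑ j, R j θ') + ((1 / 2 * ‖θ' - ξ 0‖ ^ 2 : ℝ) : EReal) := by
    calc (η : EReal) * (lam * ∑ j, R j w) + ((1 / 2 * ‖w - θ'‖ ^ 2 : ℝ) : EReal)
        = ((η * lam : ℝ) : EReal) * ∑ j, R j w + ((1 / 2 * ‖w - θ'‖ ^ 2 : ℝ) : EReal) := by
          rw [← mul_assoc, ← EReal.coe_mul]
      _ ≤ ∑ j, ((η * lam : ℝ) : EReal) * R j (ξ j.succ)
            + ((1 / 2 * ‖θ' - ξ (Fin.last J)‖ ^ 2 : ℝ) : EReal) := by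
          rw [← EReal.coe_mul_finset_sum hc]
          exact add_le_add (mul_le_mul_of_nonneg_left
            (hRproj.trans (sum_le_sum fun j _ => hlast j)) (EReal.coe_nonneg.2 hc))
            (EReal.coe_le_coe_iff.2 (by linarith))
      _ ≤ ∑ j, ((η * lam : ℝ) : EReal) * R j θ' + ((1 / 2 * ‖θ' - ξ 0‖ ^ 2 : ℝ) : EReal) :=
          htelescope
      _ = _ := by rw [← EReal.coe_mul_finset_sum hc, ← mul_assoc, ← EReal.coe_mul]
  convert EReal.add_div_le_add_div_of_coe_mul_add_le hη hscaled using 3 <;> ring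

theorem gradient_step_bound {L : E → ℝ} {σ η G : ℝ} (hη : 0 < η) {θ₀ g θ' : E}
    (hstrong : L θ₀ + ⟪g, θ' - θ₀⟫ + σ / 2 * ‖θ' - θ₀‖ ^ 2 ≤ L θ') (hg : ‖g‖ ≤ G) :
    L θ₀ + ‖θ' - (θ₀ - η • g)‖ ^ 2 / (2 * η)
      ≤ L θ' + η * G ^ 2 / 2 + (1 / (2 * η) - σ / 2) * ‖θ₀ - θ'‖ ^ 2 := by
  have hexpand : ‖θ' - (θ₀ - η • g)‖ ^ 2 / (2 * η)
      = ‖θ₀ - θ'‖ ^ 2 / (2 * η) + ⟪g, θ' - θ₀⟫ + η * ‖g‖ ^ 2 / 2 := by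
    rw [show θ' - (θ₀ - η • g) = (θ' - θ₀) + η • g by abel, norm_add_sq_real,
      inner_smul_right, real_inner_comm, norm_smul, mul_pow, Real.norm_eq_abs, sq_abs,
      norm_sub_rev]
    field_simp
  have hg2 : η * ‖g‖ ^ 2 / 2 ≤ η * G ^ 2 / 2 := by gcongr
  have hcoeff : (1 / (2 * η) - σ / 2) * ‖θ₀ - θ'‖ ^ 2
      = ‖θ₀ - θ'‖ ^ 2 / (2 * η) - σ / 2 * ‖θ₀ - θ'‖ ^ 2 := by ring
  rw [norm_sub_rev θ' θ₀] at hstrong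
  linarith

theorem regret_round_le (r : E → EReal) {L : E → ℝ} {σ s G : ℝ} (hσ : 0 < σ) (hs : 0 < s)
    {θ₀ g w θ' : E} (hstrong : L θ₀ + ⟪g, θ' - θ₀⟫ + σ / 2 * ‖θ' - θ₀‖ ^ 2 ≤ L θ')
    (hg : ‖g‖ ≤ G)
    (hsweep : r w + ((‖w - θ'‖ ^ 2 / (2 * (1 / (σ * s))) : ℝ) : EReal)
      ≤ r θ' + ((‖θ' - (θ₀ - (1 / (σ * s)) • g)‖ ^ 2 / (2 * (1 / (σ * s))) : ℝ) : EReal)) :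
    r θ₀ + L θ₀ + (r w + ((σ * s / 2 * ‖w - θ'‖ ^ 2 : ℝ) : EReal))
      ≤ r θ' + L θ' + ((G ^ 2 / (2 * σ) * s⁻¹ : ℝ) : EReal)
        + (r θ₀ + ((σ * (s - 1) / 2 * ‖θ₀ - θ'‖ ^ 2 : ℝ) : EReal)) := by
  have hgrad := gradient_step_bound (η := 1 / (σ * s)) (by positivity) hstrong hg
  set D := ‖θ' - (θ₀ - (1 / (σ * s)) • g)‖ ^ 2 / (2 * (1 / (σ * s)))
  rw [show ‖w - θ'‖ ^ 2 / (2 * (1 / (σ * s))) = σ * s / 2 * ‖w - θ'‖ ^ 2 by field_simp] at hsweep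
  calc r θ₀ + L θ₀ + (r w + ((σ * s / 2 * ‖w - θ'‖ ^ 2 : ℝ) : EReal))
      ≤ r θ₀ + L θ₀ + (r θ' + (D : EReal)) := add_le_add le_rfl hsweep
    _ = r θ₀ + r θ' + ((L θ₀ + D : ℝ) : EReal) := by rw [EReal.coe_add]; abel
    _ ≤ r θ₀ + r θ' + ((L θ' + G ^ 2 / (2 * σ) * s⁻¹
          + σ * (s - 1) / 2 * ‖θ₀ - θ'‖ ^ 2 : ℝ) : EReal) :=
        add_le_add le_rfl (EReal.coe_le_coe_iff.2 (hgrad.trans_eq (by field_simp)))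
    _ = _ := by rw [EReal.coe_add, EReal.coe_add]; abel

lemma sum_Icc_inv_le_one_add_log (n : ℕ) : ∑ i ∈ Icc 1 n, (i : ℝ)⁻¹ ≤ 1 + Real.log n := by
  simpa [harmonic_eq_sum_Icc] using harmonic_le_one_add_log n

theorem regret_log_strongly_convex_general {d J : ℕ} (T : ℕ)
    (Θ : Set (EuclideanSpace ℝ (Fin d))) (hΘconv : Convex ℝ Θ)
    (hΘ0 : (0 : EuclideanSpace ℝ (Fin d)) ∈ Θ)
    (lam G σ : ℝ) (hlam : 0 ≤ lam) (hσ : 0 < σ)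
    (L : ℕ → EuclideanSpace ℝ (Fin d) → ℝ)
    (hLlip : ∀ t ∈ Finset.Icc 1 T, ∀ θ₀ ∈ Θ, ∀ g : EuclideanSpace ℝ (Fin d),
      IsSubgradientAt (L t) g θ₀ → ‖g‖ ≤ G)
    -- each `L t` is `σ`-strongly convex
    (hstrong : ∀ t ∈ Finset.Icc 1 T, ∀ θ₀ g' : EuclideanSpace ℝ (Fin d),
      IsSubgradientAt (L t) g' θ₀ → ∀ θ : EuclideanSpace ℝ (Fin d),
        L t θ₀ + (⟪g', θ - θ₀⟫ : ℝ) + σ / 2 * ‖θ - θ₀‖ ^ 2 ≤ L t θ)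
    (R : Fin J → EuclideanSpace ℝ (Fin d) → EReal)
    (hRconv : ∀ j, ERealConvexOn (R j))
    (hRprop : ∀ j, ERealProper (R j))
    (hRnonneg : ∀ θ, (0 : EReal) ≤ ∑ j, R j θ)
    (hR0 : (∑ j, R j (0 : EuclideanSpace ℝ (Fin d))) = 0)
    -- condition (ii), for every step size used
    (hii : ∀ t ∈ Finset.Icc 1 T, ∀ j j' : Fin J, j' < j →
      ∀ θ θ' : EuclideanSpace ℝ (Fin d),
      IsProxPtOf (1 / (σ * t) * lam) (R j) θ θ' → R j' θ' ≤ R j' θ)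
    -- condition (iii)
    (hiii : ∀ θ θ' : EuclideanSpace ℝ (Fin d), IsProjPt Θ θ θ' →
      (∑ j, R j θ') ≤ ∑ j, R j θ)
    -- the iterates of the algorithm, with learning rates `η_t = 1/(σt)`
    (θ : ℕ → EuclideanSpace ℝ (Fin d)) (g : ℕ → EuclideanSpace ℝ (Fin d))
    (θtil : ℕ → Fin (J + 1) → EuclideanSpace ℝ (Fin d))
    (hθ1 : θ 1 = 0)
    (hg : ∀ t ∈ Finset.Icc 1 T, IsSubgradientAt (L t) (g t) (θ t))
    (h0 : ∀ t ∈ Finset.Icc 1 T, θtil t 0 = θ t - (1 / (σ * t)) • g t)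
    (hsteps : ∀ t ∈ Finset.Icc 1 T, ∀ j : Fin J,
      IsProxPtOf (1 / (σ * t) * lam) (R j) (θtil t j.castSucc) (θtil t j.succ))
    (hproj : ∀ t ∈ Finset.Icc 1 T, IsProjPt Θ (θtil t (Fin.last J)) (θ (t + 1))) :
    -- Reg_T ≤ G²(1 + log T)/(2σ)
    ∀ θ' ∈ Θ,
      (∑ t ∈ Finset.Icc 1 T, ((lam : EReal) * (∑ j, R j (θ t)) + ((L t (θ t) : ℝ) : EReal)))
        ≤ (∑ t ∈ Finset.Icc 1 T, ((lam : EReal) * (∑ j, R j θ') + ((L t θ' : ℝ) : EReal)))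
          + ((G ^ 2 * (1 + Real.log T) / (2 * σ) : ℝ) : EReal) := by
  intro θ' hθ'
  set r : EuclideanSpace ℝ (Fin d) → EReal := fun x => (lam : EReal) * ∑ j, R j x
  set Φ : ℕ → EReal := fun t => r (θ t) + ((σ * (t - 1) / 2 * ‖θ t - θ'‖ ^ 2 : ℝ) : EReal)
  have hmem : ∀ t ∈ Icc 1 T, θ t ∈ Θ := by
    rintro (_ | _ | t) ht
    · simp at ht
    · simpa [hθ1] using hΘ0
    · exact (hproj (t + 1) (mem_Icc.2 ⟨by omega, by simp at ht; omega⟩)).1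
  have hround (t : ℕ) (ht : t ∈ Icc 1 T) : r (θ t) + L t (θ t) + Φ (t + 1)
      ≤ r θ' + L t θ' + ((G ^ 2 / (2 * σ) * (t : ℝ)⁻¹ : ℝ) : EReal) + Φ t := by
    have hs : (0 : ℝ) < t := by exact_mod_cast (mem_Icc.1 ht).1
    have hsweep := prox_sweep_bound hΘconv R hRconv (fun j => (hRprop j).2) hlam
      (by positivity : (0 : ℝ) < 1 / (σ * t)) (θtil t) (θ (t + 1)) (hsteps t ht)
      (fun j j' hj => hii t ht j j' hj _ _ (hsteps t ht j)) (hproj t ht)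
      (hiii _ _ (hproj t ht)) hθ'
    rw [h0 t ht] at hsweep
    simpa only [Φ, Nat.cast_add, Nat.cast_one, add_sub_cancel_right] using
      regret_round_le r hσ hs (hstrong t ht _ _ (hg t ht) θ')
        (hLlip t ht _ (hmem t ht) _ (hg t ht)) hsweep
  have hΦ1 : Φ 1 = 0 := by simp [Φ, r, hθ1, hR0]
  have hΦnonneg : 0 ≤ Φ (T + 1) :=
    add_nonneg (mul_nonneg (EReal.coe_nonneg.2 hlam) (hRnonneg _))
      (EReal.coe_nonneg.2 (by push_cast; simp only [add_sub_cancel_right]; positivity))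
  have hlog : G ^ 2 / (2 * σ) * ∑ t ∈ Icc 1 T, (t : ℝ)⁻¹ ≤ G ^ 2 * (1 + Real.log T) / (2 * σ) :=
    calc _ ≤ G ^ 2 / (2 * σ) * (1 + Real.log T) := by
          gcongr; exact sum_Icc_inv_le_one_add_log T
      _ = _ := by ring
  calc _ ≤ ∑ t ∈ Icc 1 T, (r (θ t) + L t (θ t)) + Φ (T + 1) := le_add_of_nonneg_right hΦnonneg
    _ ≤ _ := sum_Icc_add_potential_le _ _ Φ hround
    _ = ∑ t ∈ Icc 1 T, (r θ' + L t θ')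
          + ((G ^ 2 / (2 * σ) * ∑ t ∈ Icc 1 T, (t : ℝ)⁻¹ : ℝ) : EReal) := by
      rw [hΦ1, add_zero, sum_add_distrib, mul_sum, EReal.coe_finset_sum]
    _ ≤ _ := add_le_add le_rfl (EReal.coe_le_coe_iff.2 hlog)

/-- logarithmic regret for strongly convex losses,
learning rates `η_t = 1/(σt)`. -/
theorem regret_log_strongly_convex {d J : ℕ} (hJ : 0 < J) (T : ℕ) (hT : 0 < T)
    (Θ : Set (EuclideanSpace ℝ (Fin d))) (hΘc : IsClosed Θ) (hΘconv : Convex ℝ Θ)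
    (hΘ0 : (0 : EuclideanSpace ℝ (Fin d)) ∈ Θ)
    (lam G σ : ℝ) (hlam : 0 ≤ lam) (hG : 0 ≤ G) (hσ : 0 < σ)
    (L : ℕ → EuclideanSpace ℝ (Fin d) → ℝ)
    (hLconv : ∀ t ∈ Finset.Icc 1 T, ConvexOn ℝ Set.univ (L t))
    (hLlip : ∀ t ∈ Finset.Icc 1 T, ∀ θ₀ ∈ Θ, ∀ g : EuclideanSpace ℝ (Fin d),
      IsSubgradientAt (L t) g θ₀ → ‖g‖ ≤ G)
    -- each `L t` is `σ`-strongly convex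
    (hstrong : ∀ t ∈ Finset.Icc 1 T, ∀ θ₀ g' : EuclideanSpace ℝ (Fin d),
      IsSubgradientAt (L t) g' θ₀ → ∀ θ : EuclideanSpace ℝ (Fin d),
        L t θ₀ + (⟪g', θ - θ₀⟫ : ℝ) + σ / 2 * ‖θ - θ₀‖ ^ 2 ≤ L t θ)
    (R : Fin J → EuclideanSpace ℝ (Fin d) → EReal)
    (hRconv : ∀ j, ERealConvexOn (R j)) (hRlsc : ∀ j, LowerSemicontinuous (R j))
    (hRprop : ∀ j, ERealProper (R j))
    (hRnonneg : ∀ θ, (0 : EReal) ≤ ∑ j, R j θ)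
    (hR0 : (∑ j, R j (0 : EuclideanSpace ℝ (Fin d))) = 0)
    -- condition (ii), for every step size used
    (hii : ∀ t ∈ Finset.Icc 1 T, ∀ j j' : Fin J, j' < j →
      ∀ θ θ' : EuclideanSpace ℝ (Fin d),
      IsProxPtOf (1 / (σ * t) * lam) (R j) θ θ' → R j' θ' ≤ R j' θ)
    -- condition (iii)
    (hiii : ∀ θ θ' : EuclideanSpace ℝ (Fin d), IsProjPt Θ θ θ' →
      (∑ j, R j θ') ≤ ∑ j, R j θ)
    -- the iterates of the algorithm, with learning rates `η_t = 1/(σt)`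
    (θ : ℕ → EuclideanSpace ℝ (Fin d)) (g : ℕ → EuclideanSpace ℝ (Fin d))
    (θtil : ℕ → Fin (J + 1) → EuclideanSpace ℝ (Fin d))
    (hθ1 : θ 1 = 0)
    (hg : ∀ t ∈ Finset.Icc 1 T, IsSubgradientAt (L t) (g t) (θ t))
    (h0 : ∀ t ∈ Finset.Icc 1 T, θtil t 0 = θ t - (1 / (σ * t)) • g t)
    (hsteps : ∀ t ∈ Finset.Icc 1 T, ∀ j : Fin J,
      IsProxPtOf (1 / (σ * t) * lam) (R j) (θtil t j.castSucc) (θtil t j.succ))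
    (hproj : ∀ t ∈ Finset.Icc 1 T, IsProjPt Θ (θtil t (Fin.last J)) (θ (t + 1))) :
    -- Reg_T ≤ G²(1 + log T)/(2σ)
    ∀ θ' ∈ Θ,
      (∑ t ∈ Finset.Icc 1 T, ((lam : EReal) * (∑ j, R j (θ t)) + ((L t (θ t) : ℝ) : EReal)))
        ≤ (∑ t ∈ Finset.Icc 1 T, ((lam : EReal) * (∑ j, R j θ') + ((L t θ' : ℝ) : EReal)))
          + ((G ^ 2 * (1 + Real.log T) / (2 * σ) : ℝ) : EReal) :=
  regret_log_strongly_convex_general T Θ hΘconv hΘ0 lam G σ hlam hσ L hLlip hstrong R hRconv hRprop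
    hRnonneg hR0 hii hiii θ g θtil hθ1 hg h0 hsteps hproj
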